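/- arXiv:1501.06875 — 3 statements merged into one kernel-verified Lean document; each statement's English description precedes it below -/
import Mathlib

section
/- (Kaplansky) Let R be a unital ring with an involution * such that for every x ∈ R the element 1 + x·x* is invertible in R. Then for every idempotent f ∈ R there exists a projection e ∈ R (i.e., e² = e and e* = e) such that Rf = Re as left ideals. -/
/-- (Kaplansky) In a unital ring with involution in which `1 + x·x*` is always
invertible, every idempotent generates the same left ideal as some projection. -/
theorem idempotent_left_ideal_eq_projection (R : Type) [Ring R] [StarRing R]
    (hinv : ∀ x : R, IsUnit (1 + x * star x)) :
    ∀ f : R, f * f = f →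
      ∃ e : R, e * e = e ∧ star e = e ∧
        Submodule.span R ({f} : Set R) = Submodule.span R ({e} : Set R) := by
  intro f hf
  set g : R := star f with hg
  have hgs : star g = f := by rw [hg, star_star]
  have hgg : g * g = g := by rw [hg, ← star_mul, hf]
  set z : R := 1 + (f - g) * star (f - g) with hzdef
  have hzz : z = 1 - f - g + f * g + g * f := by
    rw [hzdef, hg]
    simp only [star_sub, star_star]
    rw [mul_sub, sub_mul, sub_mul]
    rw [hf, ← star_mul, hf]
    abel
  obtain ⟨u, hu⟩ := hinv (f - g)
  rw [← hzdef] at hu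
  set w : R := ((u⁻¹ : Rˣ) : R) with hw
  have hzw : z * w = 1 := by rw [← hu, hw]; exact u.mul_inv
  have hwz : w * z = 1 := by rw [← hu, hw]; exact u.inv_mul
  have hzstar : star z = z := by
    rw [hzz]
    simp only [star_add, star_sub, star_one, star_mul, hgs, ← hg]
    abel
  have hwstar : star w = w := by
    have h1 : z * star w = 1 := by
      have := congrArg star hwz
      simpa [star_mul, hzstar] using this
    calc star w = (w * z) * star w := by rw [hwz, one_mul]
      _ = w * (z * star w) := by rw [mul_assoc]
      _ = w := by rw [h1, mul_one]
  have hzf : z * f = f * (g * f) := by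
    rw [hzz]
    simp only [sub_mul, add_mul, one_mul, mul_assoc, hf]
    noncomm_ring
  have hfz : f * z = f * (g * f) := by
    rw [hzz]
    simp only [mul_sub, mul_add, mul_one, ← mul_assoc, hf]
    noncomm_ring
  have hcomm : z * f = f * z := by rw [hzf, hfz]
  have hcommg : z * g = g * z := by
    have := congrArg star hcomm
    simpa [star_mul, hzstar, ← hg] using this.symm
  have hwf : w * f = f * w := by
    calc w * f = w * f * (z * w) := by rw [hzw, mul_one]
      _ = w * (f * z) * w := by noncomm_ring
      _ = w * (z * f) * w := by rw [hcomm]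
      _ = (w * z) * (f * w) := by noncomm_ring
      _ = f * w := by rw [hwz, one_mul]
  have hwg : w * g = g * w := by
    calc w * g = w * g * (z * w) := by rw [hzw, mul_one]
      _ = w * (g * z) * w := by noncomm_ring
      _ = w * (z * g) * w := by rw [hcommg]
      _ = (w * z) * (g * w) := by noncomm_ring
      _ = g * w := by rw [hwz, one_mul]
  have hwgf : w * (g * f) = (g * f) * w := by
    rw [← mul_assoc, hwg, mul_assoc, hwf, ← mul_assoc]
  have hgfg : g * (f * g) = g * z := by
    have := congrArg star hzf
    simpa [star_mul, hzstar, hgs, ← hg, mul_assoc] using this.symm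
  have h1 : (g * f) * (g * f) = z * (g * f) := by
    calc (g * f) * (g * f) = (g * (f * g)) * f := by noncomm_ring
      _ = (g * z) * f := by rw [hgfg]
      _ = (z * g) * f := by rw [hcommg]
      _ = z * (g * f) := by rw [mul_assoc]
  obtain ⟨e, he⟩ : ∃ e : R, e = w * (g * f) := ⟨_, rfl⟩
  have hef : e * e = e := by
    calc e * e = w * (g * f) * (w * (g * f)) := by rw [he]
      _ = w * ((g * f) * (g * f)) * w := by nth_rewrite 2 [hwgf]; noncomm_ring
      _ = w * (z * (g * f)) * w := by rw [h1]
      _ = (w * z) * ((g * f) * w) := by noncomm_ring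
      _ = (g * f) * w := by rw [hwz, one_mul]
      _ = e := by rw [← hwgf, ← he]
  have hestar : star e = e := by
    have h2 : star e = (g * f) * w := by
      rw [he]
      simp only [star_mul, hwstar, hgs, ← hg, mul_assoc]
    rw [h2, ← hwgf, ← he]
  have hef' : e * f = e := by
    calc e * f = w * (g * (f * f)) := by rw [he]; noncomm_ring
      _ = e := by rw [hf, he]
  have hfe : f * e = f := by
    calc f * e = (f * w) * (g * f) := by rw [he]; noncomm_ring
      _ = w * (f * (g * f)) := by rw [← hwf]; noncomm_ring
      _ = w * (z * f) := by rw [← hzf]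
      _ = f := by rw [← mul_assoc, hwz, one_mul]
  refine ⟨e, hef, hestar, ?_⟩
  apply le_antisymm
  · rw [Submodule.span_le, Set.singleton_subset_iff]
    rw [SetLike.mem_coe, Submodule.mem_span_singleton]
    exact ⟨f, by simpa [smul_eq_mul] using hfe⟩
  · rw [Submodule.span_le, Set.singleton_subset_iff]
    rw [SetLike.mem_coe, Submodule.mem_span_singleton]
    exact ⟨e, by simpa [smul_eq_mul] using hef'⟩
end

section
/- (Kaplansky) Let R be a unital ring and let e, f ∈ R be idempotents such that Re = Rf as left ideals. Then e and f are similar: there exists an invertible element s ∈ R with s^{-1}·f·s = e. -/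
/-- (Kaplansky) Two idempotents in a unital ring generating the same left ideal
are similar. -/
theorem idempotents_same_left_ideal_similar (R : Type) [Ring R] (e f : R)
    (he : e * e = e) (hf : f * f = f)
    (h : Submodule.span R ({e} : Set R) = Submodule.span R ({f} : Set R)) :
    ∃ s : Rˣ, (↑s⁻¹ : R) * f * ↑s = e := by
  have hef : e * f = e := by
    have hm : e ∈ Submodule.span R ({f} : Set R) := h ▸ Submodule.mem_span_singleton_self e
    obtain ⟨x, hx⟩ := Submodule.mem_span_singleton.mp hm
    rw [smul_eq_mul] at hx
    calc e * f = x * f * f := by rw [hx]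
    _ = x * (f * f) := by rw [mul_assoc]
    _ = x * f := by rw [hf]
    _ = e := hx
  have hfe : f * e = f := by
    have hm : f ∈ Submodule.span R ({e} : Set R) := h ▸ Submodule.mem_span_singleton_self f
    obtain ⟨x, hx⟩ := Submodule.mem_span_singleton.mp hm
    rw [smul_eq_mul] at hx
    calc f * e = x * e * e := by rw [hx]
    _ = x * (e * e) := by rw [mul_assoc]
    _ = x * e := by rw [he]
    _ = f := hx
  refine ⟨⟨1 - e + f, 1 + e - f, ?_, ?_⟩, ?_⟩
  · have : (1 - e + f) * (1 + e - f)
        = 1 + e - f - (e * 1 + e * e - e * f) + (f * 1 + f * e - f * f) := by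
      noncomm_ring
    rw [this, he, hf, hef, hfe]; noncomm_ring
  · have : (1 + e - f) * (1 - e + f)
        = 1 - e + f + (e * 1 - e * e + e * f) - (f * 1 - f * e + f * f) := by
      noncomm_ring
    rw [this, he, hf, hef, hfe]; noncomm_ring
  · show (1 + e - f) * f * (1 - e + f) = e
    have : (1 + e - f) * f * (1 - e + f)
        = (f + e * f - f * f) * (1 - e + f) := by noncomm_ring
    rw [this, hef, hf]
    have : (f + e - f) * (1 - e + f) = e - e * e + e * f := by noncomm_ring
    rw [this, he, hef]; noncomm_ring
end

section
/- Let G be a group such that for every finitely generated projective ℤ[G]-module P, the module ℓ²(G) ⊗_{ℤ[G]} P is a free ℓ²(G)-module of rank equal to the ℤ-rank of ℤ ⊗_{ℤ[G]} P. If Q is a finitely generated projective ℤ[G]-module with Q/IQ = 0 (I the augmentation ideal), then Q = 0. -/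
/-- The augmentation map `ℤ[G] → ℤ`, sending each group element to `1`. -/
noncomputable def aug (G : Type) [Group G] : MonoidAlgebra ℤ G →ₐ[ℤ] ℤ :=
  (MonoidAlgebra.lift ℤ ℤ G) 1

/-- The augmentation ideal `I = ker ε ⊆ ℤ[G]`. -/
noncomputable def augIdeal (G : Type) [Group G] : Ideal (MonoidAlgebra ℤ G) :=
  RingHom.ker (aug G)

/-! Applied to `Q` itself, the freeness hypothesis says that `L ⊗ Q` is free of rank
`rank_ℤ (Q/IQ) = 0`. Presenting `Q` as the image of an idempotent matrix `E` over `ℤ[G]`, this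
means `φ(E) = 0`, so `E = 0` by injectivity of `φ`, and `Q = 0`. -/

theorem Module.Finite.exists_idempotent_matrix_linearEquiv_range (R M : Type*) [Semiring R]
    [AddCommMonoid M] [Module R M] [Module.Finite R M] [Module.Projective R M] :
    ∃ (n : ℕ) (E : Matrix (Fin n) (Fin n) R), E * E = E ∧
      Nonempty (M ≃ₗ[R] LinearMap.range E.vecMulLinear) := by
  obtain ⟨n, f, g, hf, hg, hfg⟩ := Module.Finite.exists_comp_eq_id_of_projective R M
  set E := LinearMap.toMatrixRight' (g ∘ₗ f)
  have hE : E.vecMulLinear = g ∘ₗ f := LinearMap.toMatrixRight'.symm_apply_apply _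
  refine ⟨n, E, ?_, ?_⟩
  · apply Matrix.toLinearMapRight'.injective
    rw [Matrix.toLinearMapRight'_mul, Matrix.toLinearMapRight', LinearEquiv.symm_apply_apply,
      LinearMap.comp_assoc, ← LinearMap.comp_assoc f g f, hfg, LinearMap.id_comp]
  · have hrange : LinearMap.range E.vecMulLinear = LinearMap.range g := by
      rw [hE, LinearMap.range_comp, LinearMap.range_eq_top.mpr hf, Submodule.map_top]
    exact ⟨(LinearEquiv.ofInjective g hg).trans (LinearEquiv.ofEq _ _ hrange.symm)⟩

theorem Matrix.subsingleton_range_vecMulLinear_iff {R m n : Type*} [Semiring R] [Fintype m]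
    {M : Matrix m n R} : Subsingleton (LinearMap.range M.vecMulLinear) ↔ M = 0 := by
  classical
  rw [Submodule.subsingleton_iff_eq_bot, LinearMap.range_eq_bot]
  exact Matrix.toLinearMapRight'.map_eq_zero_iff

theorem Submodule.ideal_smul_top_eq_top_of_linearEquiv {R M N : Type*} [Semiring R]
    [AddCommMonoid M] [Module R M] [AddCommMonoid N] [Module R N] {I : Ideal R}
    (e : M ≃ₗ[R] N) (h : I • (⊤ : Submodule R M) = ⊤) :
    I • (⊤ : Submodule R N) = ⊤ := by
  have := congrArg (Submodule.map (e : M →ₗ[R] N)) h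
  rwa [Submodule.map_smul'', Submodule.map_top, LinearEquiv.range] at this

theorem proj_aug_trivial_eq_zero_of_l2_free_general (G : Type) [Group G]
    (L : Type) [Ring L] (φ : MonoidAlgebra ℤ G →+* L)
    (hφ : Function.Injective φ)
    (hfree : ∀ (n : ℕ) (E : Matrix (Fin n) (Fin n) (MonoidAlgebra ℤ G)),
        E * E = E →
        Nonempty ((LinearMap.range (E.map φ).vecMulLinear) ≃ₗ[L]
          (Fin (Module.finrank ℤ
            ((LinearMap.range E.vecMulLinear) ⧸
              (augIdeal G • (⊤ : Submodule (MonoidAlgebra ℤ G)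
                (LinearMap.range E.vecMulLinear))))) → L)))
    (Q : Type) [AddCommGroup Q] [Module (MonoidAlgebra ℤ G) Q]
    [Module.Finite (MonoidAlgebra ℤ G) Q]
    [Module.Projective (MonoidAlgebra ℤ G) Q]
    (hIQ : augIdeal G • (⊤ : Submodule (MonoidAlgebra ℤ G) Q) = ⊤) :
    Subsingleton Q := by
  obtain ⟨n, E, hEE, ⟨e⟩⟩ :=
    Module.Finite.exists_idempotent_matrix_linearEquiv_range (MonoidAlgebra ℤ G) Q
  have hrank : Module.finrank ℤ ((LinearMap.range E.vecMulLinear) ⧸ (augIdeal G •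
      (⊤ : Submodule (MonoidAlgebra ℤ G) (LinearMap.range E.vecMulLinear)))) = 0 := by
    have := Submodule.Quotient.subsingleton_iff.mpr
      (Submodule.ideal_smul_top_eq_top_of_linearEquiv e hIQ)
    exact Module.finrank_zero_of_subsingleton
  obtain ⟨ψ⟩ := hfree n E hEE
  rw [hrank] at ψ
  have hφE : E.map φ = 0 :=
    Matrix.subsingleton_range_vecMulLinear_iff.mp ψ.toEquiv.subsingleton
  have hE : E = 0 := Matrix.map_injective hφ (hφE.trans (Matrix.map_zero _ (map_zero φ)).symm)
  have := Matrix.subsingleton_range_vecMulLinear_iff.mpr hE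
  exact e.toEquiv.subsingleton

/-- (Lemma 3.1) Let `G` be a group, and let `L` be a ring receiving `ℤ[G]`
(playing the role of `ℓ²(G)`, with its faithful tracial von Neumann trace
`τ`), such that for every finitely generated projective `ℤ[G]`-module `P`
(given as the image of an idempotent matrix `E`), the extension of scalars
`L ⊗_{ℤ[G]} P` (the image of `E` over `L`) is a free `L`-module of rank equal
to the `ℤ`-rank of `ℤ ⊗_{ℤ[G]} P ≅ P/IP`.  If `Q` is a finitely generated
projective `ℤ[G]`-module with `Q/IQ = 0`, then `Q = 0`. -/
theorem proj_aug_trivial_eq_zero_of_l2_free (G : Type) [Group G]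
    (L : Type) [Ring L] (φ : MonoidAlgebra ℤ G →+* L)
    (hφ : Function.Injective φ)
    (τ : L → ℂ)
    (hτ1 : τ 1 = 1)
    (hτtr : ∀ x y : L, τ (x * y) = τ (y * x))
    (hτfaith : ∀ n (e : Matrix (Fin n) (Fin n) L), e * e = e →
        Matrix.trace (e.map τ) = 0 → e = 0)
    (hfree : ∀ (n : ℕ) (E : Matrix (Fin n) (Fin n) (MonoidAlgebra ℤ G)),
        E * E = E →
        Nonempty ((LinearMap.range (E.map φ).vecMulLinear) ≃ₗ[L]
          (Fin (Module.finrank ℤ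
            ((LinearMap.range E.vecMulLinear) ⧸
              (augIdeal G • (⊤ : Submodule (MonoidAlgebra ℤ G)
                (LinearMap.range E.vecMulLinear))))) → L)))
    (Q : Type) [AddCommGroup Q] [Module (MonoidAlgebra ℤ G) Q]
    [Module.Finite (MonoidAlgebra ℤ G) Q]
    [Module.Projective (MonoidAlgebra ℤ G) Q]
    (hIQ : augIdeal G • (⊤ : Submodule (MonoidAlgebra ℤ G) Q) = ⊤) :
    Subsingleton Q :=
  proj_aug_trivial_eq_zero_of_l2_free_general G L φ hφ hfree Q hIQ
end
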